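/- If r is a square root on a pseudo MV-algebra M, then the image of r equals the interval [r(0), 1]; more generally, for a ≤ b in M, r([a,b]) = [r(a), r(b)]. -/

import Mathlib

/-- A pseudo MV-algebra `(M; ⊕, ⁻, ∼, 0, 1)` satisfying axioms (A1)–(A8),
with `x ⊙ y := (y⁻ ⊕ x⁻)∼`. -/
class PseudoMV (M : Type*) where
  oplus : M → M → M
  lneg : M → M
  rneg : M → M
  zero : M
  one : M
  oplus_assoc : ∀ x y z : M, oplus x (oplus y z) = oplus (oplus x y) z
  oplus_zero : ∀ x : M, oplus x zero = x
  zero_oplus : ∀ x : M, oplus zero x = x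
  oplus_one : ∀ x : M, oplus x one = one
  one_oplus : ∀ x : M, oplus one x = one
  lneg_one : lneg one = zero
  rneg_one : rneg one = zero
  a5 : ∀ x y : M, rneg (oplus (lneg x) (lneg y)) = lneg (oplus (rneg x) (rneg y))
  a6₁ : ∀ x y : M,
    oplus x (rneg (oplus (lneg y) (lneg (rneg x)))) =
      oplus y (rneg (oplus (lneg x) (lneg (rneg y))))
  a6₂ : ∀ x y : M,
    oplus x (rneg (oplus (lneg y) (lneg (rneg x)))) =
      oplus (rneg (oplus (lneg (lneg y)) (lneg x))) y
  a6₃ : ∀ x y : M,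
    oplus x (rneg (oplus (lneg y) (lneg (rneg x)))) =
      oplus (rneg (oplus (lneg (lneg x)) (lneg y))) x
  a7 : ∀ x y : M,
    rneg (oplus (lneg (oplus (lneg x) y)) (lneg x)) =
      rneg (oplus (lneg y) (lneg (oplus x (rneg y))))
  a8 : ∀ x : M, rneg (lneg x) = x

namespace PseudoMV

variable {M : Type*} [PseudoMV M]

/-- `x ⊙ y := (y⁻ ⊕ x⁻)∼`. -/
def mul (x y : M) : M := rneg (oplus (lneg y) (lneg x))

/-- `x ∨ y = x ⊕ (x∼ ⊙ y)` (axiom (A6)). -/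
def sup (x y : M) : M := oplus x (mul (rneg x) y)

/-- `x ∧ y = x ⊙ (x⁻ ⊕ y)` (axiom (A7)). -/
def inf (x y : M) : M := mul x (oplus (lneg x) y)

/-- The lattice order of a pseudo MV-algebra. -/
def le (x y : M) : Prop := sup x y = y

/-- `x → y := x⁻ ⊕ y`. -/
def arrow (x y : M) : M := oplus (lneg x) y

/-- `x ⇝ y := y ⊕ x∼`. -/
def squig (x y : M) : M := oplus y (rneg x)

/-- A weak square root: (Sq1) and (Sq2). -/
def IsWeakSqrt (r : M → M) : Prop :=
  (∀ x : M, mul (r x) (r x) = x) ∧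
  (∀ x y : M, le (mul y y) x → le y (r x))

/-- A square root: (Sq1), (Sq2) and (Sq3). -/
def IsSqrt (r : M → M) : Prop :=
  IsWeakSqrt r ∧
  (∀ x : M, r (lneg x) = arrow (r x) (r zero) ∧ r (rneg x) = squig (r x) (r zero))

end PseudoMV

open PseudoMV

/-!
Write `w = r (z ⊙ z)` for `z ≥ r 0`. Then `z ≤ w` by (Sq2), and squeezing `z ⊙ z ≤ w ⊙ z ≤ w ⊙ w = z ⊙ z`
gives `w ⊙ z = w ⊙ w`, hence `w ≤ w⁻ ∨ w = w⁻ ⊕ w ⊙ w = w⁻ ⊕ w ⊙ z = w⁻ ∨ z`. By distributivity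
`w ≤ (w ∧ w⁻) ∨ (w ∧ z)`, and `w ∧ w⁻ ≤ r 0 ≤ z` because its square lies below `w ⊙ w⁻ = 0`.
So `w = z`: every element of `[r 0, 1]` is a value of `r`, and the monotone map `r` sends `[a, b]`
onto `[r a, r b]` since `x ↦ x ⊙ x` is monotone and inverts `r`.
-/

namespace PseudoMV

variable {M : Type*} [PseudoMV M]

local infix:50 " ≼ " => le

theorem lneg_rneg (x : M) : lneg (rneg x) = x := by
  have h := a5 (one : M) x
  simp only [lneg_one, rneg_one, zero_oplus] at h
  rw [← h, a8]

theorem lneg_zero : lneg (zero : M) = one := by rw [← rneg_one, lneg_rneg]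

theorem mul_one (x : M) : mul x one = x := by
  rw [mul, lneg_one, zero_oplus, a8]

theorem one_mul (x : M) : mul one x = x := by
  rw [mul, lneg_one, oplus_zero, a8]

theorem oplus_rneg_self (x : M) : oplus x (rneg x) = one := by
  simpa only [lneg_one, zero_oplus, a8, oplus_one] using a6₂ x one

theorem lneg_oplus_self (x : M) : oplus (lneg x) x = one := by
  simpa only [lneg_one, zero_oplus, oplus_zero, a8, oplus_rneg_self] using (a6₃ x one).symm

theorem lneg_oplus (x y : M) : lneg (oplus x y) = mul (lneg y) (lneg x) := by
  rw [mul, a5, a8, a8]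

theorem mul_lneg_self (x : M) : mul x (lneg x) = zero := by
  rw [mul, lneg_oplus_self, rneg_one]

theorem rneg_mul_self (x : M) : mul (rneg x) x = zero := by
  rw [mul, lneg_rneg, lneg_oplus_self, rneg_one]

theorem sup_comm (x y : M) : sup x y = sup y x := a6₁ x y

theorem sup_eq_mul_lneg_oplus (x y : M) : sup x y = oplus (mul x (lneg y)) y := a6₂ x y

theorem sup_lneg_left (x y : M) : sup (lneg x) y = oplus (lneg x) (mul x y) := by
  rw [sup, a8]

theorem inf_eq_oplus_rneg_mul (x y : M) : inf x y = mul (oplus x (rneg y)) y := a7 x y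

theorem le_iff_lneg_oplus_eq_one {x y : M} : x ≼ y ↔ oplus (lneg x) y = one := by
  constructor
  · intro h
    rw [← show oplus x (mul (rneg x) y) = y from h, oplus_assoc, lneg_oplus_self, one_oplus]
  · intro h
    show sup x y = y
    rw [sup_comm, sup, mul, lneg_rneg, h, rneg_one, oplus_zero]

theorem le_iff_oplus_rneg_eq_one {x y : M} : x ≼ y ↔ oplus y (rneg x) = one := by
  constructor
  · intro h
    rw [← show sup y x = y from (sup_comm y x).trans h, sup_eq_mul_lneg_oplus, ← oplus_assoc,
      oplus_rneg_self, oplus_one]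
  · intro h
    have h0 : mul x (lneg y) = zero := by
      rw [← lneg_one, ← h, lneg_oplus, lneg_rneg]
    show sup x y = y
    rw [sup_eq_mul_lneg_oplus, h0, zero_oplus]

theorem le_refl (x : M) : x ≼ x := by
  show oplus x (mul (rneg x) x) = x
  rw [rneg_mul_self, oplus_zero]

theorem le_one (x : M) : x ≼ one := le_iff_lneg_oplus_eq_one.2 (oplus_one _)

theorem zero_le (x : M) : zero ≼ x := le_iff_lneg_oplus_eq_one.2 (by rw [lneg_zero, one_oplus])

theorem interval_zero_one_eq_univ : {z : M | zero ≼ z ∧ z ≼ one} = Set.univ :=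
  Set.eq_univ_of_forall fun z => ⟨zero_le z, le_one z⟩

theorem le_trans {x y z : M} (hxy : x ≼ y) (hyz : y ≼ z) : x ≼ z := by
  rw [le_iff_lneg_oplus_eq_one] at hxy ⊢
  rw [← show oplus y (mul (rneg y) z) = z from hyz, oplus_assoc, hxy, one_oplus]

instance : @Trans M M M le le le := ⟨le_trans⟩

theorem le_antisymm {x y : M} (hxy : x ≼ y) (hyx : y ≼ x) : x = y := by
  rw [← show sup y x = x from hyx, sup_comm]
  exact hxy

theorem le_oplus_right (x y : M) : x ≼ oplus x y :=
  le_iff_lneg_oplus_eq_one.2 (by rw [oplus_assoc, lneg_oplus_self, one_oplus])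

theorem le_oplus_left (x y : M) : x ≼ oplus y x :=
  le_iff_oplus_rneg_eq_one.2 (by rw [← oplus_assoc, oplus_rneg_self, oplus_one])

theorem oplus_le_oplus_left {x y : M} (h : x ≼ y) (a : M) : oplus a x ≼ oplus a y := by
  rw [← show oplus x (mul (rneg x) y) = y from h, oplus_assoc]
  exact le_oplus_right _ _

theorem oplus_le_oplus_right {x y : M} (h : x ≼ y) (a : M) : oplus x a ≼ oplus y a := by
  rw [← show sup y x = y from (sup_comm y x).trans h, sup_eq_mul_lneg_oplus, ← oplus_assoc]
  exact le_oplus_left _ _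

theorem lneg_le_lneg {x y : M} (h : x ≼ y) : lneg y ≼ lneg x := by
  rw [le_iff_oplus_rneg_eq_one, a8]
  exact le_iff_lneg_oplus_eq_one.1 h

theorem rneg_le_rneg {x y : M} (h : x ≼ y) : rneg y ≼ rneg x := by
  rw [le_iff_lneg_oplus_eq_one, lneg_rneg]
  exact le_iff_oplus_rneg_eq_one.1 h

theorem mul_le_mul_left {x y : M} (h : x ≼ y) (a : M) : mul a x ≼ mul a y :=
  rneg_le_rneg (oplus_le_oplus_right (lneg_le_lneg h) _)

theorem mul_le_mul_right {x y : M} (h : x ≼ y) (a : M) : mul x a ≼ mul y a :=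
  rneg_le_rneg (oplus_le_oplus_left (lneg_le_lneg h) _)

theorem mul_self_le_mul_self {x y : M} (h : x ≼ y) : mul x x ≼ mul y y :=
  le_trans (mul_le_mul_left h x) (mul_le_mul_right h y)

theorem mul_le_left (x y : M) : mul x y ≼ x := by
  simpa only [mul_one] using mul_le_mul_left (le_one y) x

theorem mul_le_right (x y : M) : mul x y ≼ y := by
  simpa only [one_mul] using mul_le_mul_right (le_one x) y

theorem le_sup_left (x y : M) : x ≼ sup x y := le_oplus_right x _

theorem le_sup_right (x y : M) : y ≼ sup x y := by
  rw [sup_eq_mul_lneg_oplus]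
  exact le_oplus_left y _

theorem sup_le {x y z : M} (hxz : x ≼ z) (hyz : y ≼ z) : sup x y ≼ z := by
  have h : sup x y ≼ sup x z := oplus_le_oplus_left (mul_le_mul_left hyz (rneg x)) x
  rwa [show sup x z = z from hxz] at h

theorem inf_le_left (x y : M) : inf x y ≼ x := mul_le_left x _

theorem inf_le_right (x y : M) : inf x y ≼ y := by
  rw [inf_eq_oplus_rneg_mul]
  exact mul_le_right _ _

theorem le_inf {x y z : M} (hxy : x ≼ y) (hxz : x ≼ z) : x ≼ inf y z := by
  have hyx : inf y x = x := by
    refine le_antisymm (inf_le_right y x) ?_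
    simpa only [inf_eq_oplus_rneg_mul, oplus_rneg_self, one_mul] using
      mul_le_mul_right (oplus_le_oplus_right hxy (rneg x)) x
  have h := mul_le_mul_left (oplus_le_oplus_left hxz (lneg y)) y
  rwa [← inf, ← inf, hyx] at h

theorem inf_eq_left {x y : M} (h : x ≼ y) : inf x y = x :=
  le_antisymm (inf_le_left x y) (le_inf (le_refl x) h)

theorem mul_sup_le (x y z : M) : mul x (sup y z) ≼ sup (mul x y) (mul x z) := by
  have hy : y ≼ oplus (lneg x) (sup (mul x y) (mul x z)) := calc
    y ≼ sup (lneg x) y := le_sup_right _ _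
    _ = oplus (lneg x) (mul x y) := sup_lneg_left x y
    _ ≼ _ := oplus_le_oplus_left (le_sup_left _ _) _
  have hz : z ≼ oplus (lneg x) (sup (mul x y) (mul x z)) := calc
    z ≼ sup (lneg x) z := le_sup_right _ _
    _ = oplus (lneg x) (mul x z) := sup_lneg_left x z
    _ ≼ _ := oplus_le_oplus_left (le_sup_right _ _) _
  exact le_trans (mul_le_mul_left (sup_le hy hz) x) (inf_le_right x _)

theorem inf_sup_le (x y z : M) : inf x (sup y z) ≼ sup (inf x y) (inf x z) := by
  rw [inf_eq_oplus_rneg_mul]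
  have key : ∀ u, u ≼ sup y z → mul (oplus x (rneg (sup y z))) u ≼ inf x u := by
    intro u hu
    rw [inf_eq_oplus_rneg_mul]
    exact mul_le_mul_right (oplus_le_oplus_left (rneg_le_rneg hu) x) u
  exact le_trans (mul_sup_le _ y z) <| sup_le
    (le_trans (key y (le_sup_left y z)) (le_sup_left _ _))
    (le_trans (key z (le_sup_right y z)) (le_sup_right _ _))

namespace IsWeakSqrt

variable {r : M → M} (hr : IsWeakSqrt r)
include hr

theorem monotone {x y : M} (h : x ≼ y) : r x ≼ r y :=
  hr.2 y (r x) (by rwa [hr.1 x])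

theorem apply_one : r one = one :=
  le_antisymm (le_one _) (hr.2 one one (by rw [mul_one]; exact le_refl one))

theorem inf_lneg_le_apply_zero (x : M) : inf x (lneg x) ≼ r zero := by
  refine hr.2 zero _ ?_
  rw [← mul_lneg_self x]
  exact le_trans (mul_le_mul_left (inf_le_right x _) _) (mul_le_mul_right (inf_le_left x _) _)

theorem apply_mul_self {z : M} (hz : r zero ≼ z) : r (mul z z) = z := by
  set w := r (mul z z)
  have hzw : z ≼ w := hr.2 (mul z z) z (le_refl _)
  have hww : mul w w = mul z z := hr.1 _
  have hwz : mul w z = mul w w :=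
    le_antisymm (hww ▸ mul_le_mul_left hzw w) (hww ▸ mul_le_mul_right hzw z)
  have hw : w ≼ sup (lneg w) z := by
    rw [sup_lneg_left, hwz, ← sup_lneg_left]
    exact le_sup_right _ _
  refine le_antisymm ?_ hzw
  calc w = inf w (sup (lneg w) z) := (inf_eq_left hw).symm
    _ ≼ sup (inf w (lneg w)) (inf w z) := inf_sup_le _ _ _
    _ ≼ z := sup_le (le_trans (hr.inf_lneg_le_apply_zero w) hz) (inf_le_right _ _)

theorem image_interval {a b : M} :
    r '' {z : M | a ≼ z ∧ z ≼ b} = {z : M | r a ≼ z ∧ z ≼ r b} := by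
  ext y
  constructor
  · rintro ⟨z, ⟨haz, hzb⟩, rfl⟩
    exact ⟨hr.monotone haz, hr.monotone hzb⟩
  · rintro ⟨hay, hyb⟩
    refine ⟨mul y y, ⟨?_, ?_⟩, hr.apply_mul_self (le_trans (hr.monotone (zero_le a)) hay)⟩
    · simpa only [hr.1] using mul_self_le_mul_self hay
    · simpa only [hr.1] using mul_self_le_mul_self hyb

end IsWeakSqrt

end PseudoMV

theorem stmt6 {M : Type*} [PseudoMV M] (r : M → M) (hr : IsSqrt r) :
    r '' Set.univ = {z : M | le (r zero) z ∧ le z one} ∧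
    (∀ a b : M, le a b →
      r '' {z : M | le a z ∧ le z b} = {z : M | le (r a) z ∧ le z (r b)}) := by
  refine ⟨?_, fun a b _ => hr.1.image_interval⟩
  rw [← interval_zero_one_eq_univ, hr.1.image_interval, hr.1.apply_one]
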